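/- arXiv:2309.01349 — 2 statements merged into one kernel-verified Lean document; each statement's English description precedes it below -/
import Mathlib

section
/- (Vanishing Criterion) Let φ : SO → ℝ be a lattice-linear homomorphism with φ(1) = 0. If f, g ∈ SO satisfy 1 ≤ f ≤ g pointwise and g(n)/f(n) → ∞ as n → ∞ along the natural numbers, then φ(f) = 0. -/
open Filter Metric Set

noncomputable section

/-- A continuous function on the half-line `[0,∞)` (modeled as `ℝ≥0`) is
slowly oscillating if for every `R > 0` and `ε > 0` there is `M > 0` with
`diam f([x, x+R]) < ε` for all `x > M`. -/
def SO (f : NNReal → ℝ) : Prop :=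
  Continuous f ∧ ∀ R : NNReal, 0 < R → ∀ ε : ℝ, 0 < ε → ∃ M : NNReal, 0 < M ∧
    ∀ x : NNReal, M < x → Metric.diam (f '' Set.Icc x (x + R)) < ε

/-- A lattice-linear homomorphism of the vector lattice `SO`, encoded as a
function on all of `NNReal → ℝ` whose homomorphism properties are required on
slowly oscillating functions. -/
def IsHom (φ : (NNReal → ℝ) → ℝ) : Prop :=
  (∀ f g : NNReal → ℝ, SO f → SO g → ∀ c d : ℝ,
      φ (c • f + d • g) = c * φ f + d * φ g) ∧
  (∀ f g : NNReal → ℝ, SO f → SO g → φ (f ⊔ g) = φ f ⊔ φ g) ∧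
  (∀ f g : NNReal → ℝ, SO f → SO g → φ (f ⊓ g) = φ f ⊓ φ g)

/-- The constant function `1` is slowly oscillating. -/
lemma SO_one : SO (1 : NNReal → ℝ) := by
  refine ⟨continuous_const, fun R hR ε hε => ⟨1, one_pos, fun x hx => ?_⟩⟩
  have : Metric.diam ((1 : NNReal → ℝ) '' Set.Icc x (x + R)) = 0 := by
    apply Metric.diam_subsingleton
    rintro p ⟨a, _, rfl⟩ q ⟨b, _, rfl⟩; rfl
  rw [this]; exact hε

/-- Slowly oscillating functions are closed under linear combinations. -/
lemma SO_combo {f g : NNReal → ℝ} (hf : SO f) (hg : SO g) (c d : ℝ) :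
    SO (c • f + d • g) := by
  refine ⟨(hf.1.const_smul c).add (hg.1.const_smul d), fun R hR ε hε => ?_⟩
  obtain ⟨Mf, hMf, hMf'⟩ := hf.2 R hR (ε / (4 * (|c| + 1))) (by positivity)
  obtain ⟨Mg, hMg, hMg'⟩ := hg.2 R hR (ε / (4 * (|d| + 1))) (by positivity)
  refine ⟨Mf + Mg + 1, by positivity, fun x hx => ?_⟩
  have h1 := hMf' x (lt_of_le_of_lt ((self_le_add_right Mf Mg).trans (self_le_add_right _ 1)) hx)
  have h2 := hMg' x (lt_of_le_of_lt ((self_le_add_left Mg Mf).trans (self_le_add_right _ 1)) hx)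
  have hbf : Bornology.IsBounded (f '' Set.Icc x (x + R)) :=
    (isCompact_Icc.image hf.1).isBounded
  have hbg : Bornology.IsBounded (g '' Set.Icc x (x + R)) :=
    (isCompact_Icc.image hg.1).isBounded
  refine lt_of_le_of_lt (Metric.diam_le_of_forall_dist_le (by positivity : (0:ℝ) ≤ ε/2) ?_)
    (by linarith)
  rintro p ⟨a, ha, rfl⟩ q ⟨b, hb, rfl⟩
  have dfa : dist (f a) (f b) ≤ Metric.diam (f '' Set.Icc x (x + R)) :=
    Metric.dist_le_diam_of_mem hbf ⟨a, ha, rfl⟩ ⟨b, hb, rfl⟩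
  have dga : dist (g a) (g b) ≤ Metric.diam (g '' Set.Icc x (x + R)) :=
    Metric.dist_le_diam_of_mem hbg ⟨a, ha, rfl⟩ ⟨b, hb, rfl⟩
  have key : dist ((c • f + d • g) a) ((c • f + d • g) b)
      ≤ |c| * dist (f a) (f b) + |d| * dist (g a) (g b) := by
    simp only [Pi.add_apply, Pi.smul_apply, smul_eq_mul, Real.dist_eq]
    calc |c * f a + d * g a - (c * f b + d * g b)|
        = |c * (f a - f b) + d * (g a - g b)| := by ring_nf
      _ ≤ |c * (f a - f b)| + |d * (g a - g b)| := abs_add_le _ _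
      _ = |c| * |f a - f b| + |d| * |g a - g b| := by rw [abs_mul, abs_mul]
  have hc : |c| * (ε / (4 * (|c| + 1))) ≤ ε / 4 := by
    rw [mul_div_assoc', div_le_div_iff₀ (by positivity) (by norm_num)]
    nlinarith [abs_nonneg c]
  have hd : |d| * (ε / (4 * (|d| + 1))) ≤ ε / 4 := by
    rw [mul_div_assoc', div_le_div_iff₀ (by positivity) (by norm_num)]
    nlinarith [abs_nonneg d]
  have e1 : |c| * dist (f a) (f b) ≤ ε / 4 :=
    le_trans (mul_le_mul_of_nonneg_left (dfa.trans h1.le) (abs_nonneg c)) hc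
  have e2 : |d| * dist (g a) (g b) ≤ ε / 4 :=
    le_trans (mul_le_mul_of_nonneg_left (dga.trans h2.le) (abs_nonneg d)) hd
  linarith

/-- Key analytic estimate: for each natural `k` there is a constant `C` with
`k · f ≤ g + C` pointwise. -/
lemma key_bound (f g : NNReal → ℝ) (hf : SO f) (hg : SO g)
    (hf1 : ∀ x, 1 ≤ f x)
    (hlim : Filter.Tendsto (fun n : ℕ => g n / f n) Filter.atTop Filter.atTop) (k : ℕ) :
    ∃ C : ℝ, 0 ≤ C ∧ ∀ x, (k : ℝ) * f x ≤ g x + C := by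
  obtain ⟨N, hN⟩ := (Filter.tendsto_atTop.mp hlim (2 * k + 2)).exists_forall_of_atTop
  obtain ⟨Mf, _, hMf⟩ := hf.2 1 one_pos 1 one_pos
  obtain ⟨Mg, _, hMg⟩ := hg.2 1 one_pos 1 one_pos
  set M0 : ℕ := N + ⌈Mf⌉₊ + ⌈Mg⌉₊ + 1 with hM0
  have step1 : ∀ x : NNReal, M0 ≤ ⌊x⌋₊ → (k : ℝ) * f x ≤ g x := by
    intro x hx
    set n : ℕ := ⌊x⌋₊ with hn
    have hxmem : x ∈ Set.Icc (n : NNReal) ((n : NNReal) + 1) :=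
      ⟨Nat.floor_le (zero_le : 0 ≤ x), (Nat.lt_floor_add_one x).le⟩
    have hnmem : (n : NNReal) ∈ Set.Icc (n : NNReal) ((n : NNReal) + 1) :=
      ⟨le_refl _, self_le_add_right _ 1⟩
    have hMfn : Mf < (n : NNReal) := by
      calc Mf ≤ (⌈Mf⌉₊ : NNReal) := Nat.le_ceil Mf
        _ < (n : NNReal) := by rw [Nat.cast_lt]; omega
    have hMgn : Mg < (n : NNReal) := by
      calc Mg ≤ (⌈Mg⌉₊ : NNReal) := Nat.le_ceil Mg
        _ < (n : NNReal) := by rw [Nat.cast_lt]; omega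
    have hbf : Bornology.IsBounded (f '' Set.Icc (n : NNReal) ((n : NNReal) + 1)) :=
      (isCompact_Icc.image hf.1).isBounded
    have hbg : Bornology.IsBounded (g '' Set.Icc (n : NNReal) ((n : NNReal) + 1)) :=
      (isCompact_Icc.image hg.1).isBounded
    have dfx : dist (f x) (f n) < 1 :=
      lt_of_le_of_lt (Metric.dist_le_diam_of_mem hbf ⟨x, hxmem, rfl⟩ ⟨n, hnmem, rfl⟩)
        (hMf n hMfn)
    have dgx : dist (g x) (g n) < 1 :=
      lt_of_le_of_lt (Metric.dist_le_diam_of_mem hbg ⟨x, hxmem, rfl⟩ ⟨n, hnmem, rfl⟩)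
        (hMg n hMgn)
    have hratio : (2 * (k : ℝ) + 2) ≤ g n / f n := by
      have := hN n (by omega)
      push_cast at this ⊢
      exact this
    have hfn : (1 : ℝ) ≤ f n := hf1 n
    have hgn : (2 * (k:ℝ) + 2) * f n ≤ g n := by
      rw [← le_div_iff₀ (by linarith)]
      exact hratio
    rw [Real.dist_eq, abs_lt] at dfx dgx
    have hk : (0:ℝ) ≤ (k:ℝ) := Nat.cast_nonneg k
    nlinarith [hf1 x]
  have hcont : Continuous (fun x : NNReal => (k : ℝ) * f x - g x) :=
    (hf.1.const_smul (k:ℝ)).sub hg.1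
  obtain ⟨C, hC⟩ := (isCompact_Icc.image hcont).bddAbove
  refine ⟨max C 0, le_max_right _ _, fun x => ?_⟩
  by_cases hx : x ≤ ((M0 : NNReal))
  · have h : (k : ℝ) * f x - g x ≤ C := hC ⟨x, ⟨(zero_le : 0 ≤ x), hx⟩, rfl⟩
    have := h.trans (le_max_left C 0)
    linarith
  · push_neg at hx
    have h := step1 x (Nat.le_floor hx.le)
    have h0 : (0:ℝ) ≤ max C 0 := le_max_right _ _
    linarith

theorem stmt_6 (φ : (NNReal → ℝ) → ℝ) (hφ : IsHom φ) (h1 : φ 1 = 0)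
    (f g : NNReal → ℝ) (hf : SO f) (hg : SO g)
    (hf1 : ∀ x, 1 ≤ f x) (hfg : ∀ x, f x ≤ g x)
    (hlim : Filter.Tendsto (fun n : ℕ => g n / f n) Filter.atTop Filter.atTop) :
    φ f = 0 := by
  obtain ⟨hlin, hsup, hinf⟩ := hφ
  -- monotonicity of φ on SO
  have hmono : ∀ a b : NNReal → ℝ, SO a → SO b → (∀ x, a x ≤ b x) → φ a ≤ φ b := by
    intro a b ha hb hab
    have hab' : a ⊓ b = a := by
      funext x; exact min_eq_left (hab x)
    have := hinf a b ha hb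
    rw [hab'] at this
    rw [this]
    exact inf_le_right
  -- φ f ≥ 0
  have hge : 0 ≤ φ f := h1 ▸ hmono 1 f SO_one hf hf1
  -- for each k : ℕ, k * φ f ≤ φ g
  have hkey : ∀ k : ℕ, (k : ℝ) * φ f ≤ φ g := by
    intro k
    obtain ⟨C, hC0, hC⟩ := key_bound f g hf hg hf1 hlim k
    have hSOkf : SO ((k : ℝ) • f + (0 : ℝ) • g) := SO_combo hf hg _ _
    have hSOgC : SO ((1 : ℝ) • g + C • 1) := SO_combo hg SO_one _ _
    have hle : ∀ x, ((k : ℝ) • f + (0 : ℝ) • g) x ≤ ((1 : ℝ) • g + C • 1) x := by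
      intro x
      simp only [Pi.add_apply, Pi.smul_apply, Pi.one_apply, smul_eq_mul, zero_mul, one_mul,
        mul_one, add_zero]
      exact hC x
    have h2 := hmono _ _ hSOkf hSOgC hle
    rw [hlin f g hf hg (k : ℝ) 0, hlin g 1 hg SO_one 1 C] at h2
    rw [h1] at h2
    linarith
  -- conclude
  by_contra hne
  have hpos : 0 < φ f := lt_of_le_of_ne hge (Ne.symm hne)
  obtain ⟨k, hk⟩ := exists_nat_gt (φ g / φ f)
  have := hkey k
  rw [div_lt_iff₀ hpos] at hk
  linarith
end
end

section
/- For every strictly increasing sequence a of natural numbers there exists a strictly increasing sequence b of natural numbers such that η_a(x) ≤ η_b(x) for all x ∈ [0,∞) and η_b(n)/η_a(n) → ∞ as n → ∞. -/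
open Filter Metric Set

noncomputable section

/-- The approximating functions `η_a^n`: `η_a^0 (x) = x + 1`, and
`η_a^{n+1}` agrees with `η_a^n` below `a (n+1)` and grows with slope
`1/(n+1)` above it. -/
noncomputable def etaAux (a : ℕ → ℕ) : ℕ → NNReal → ℝ
  | 0 => fun x => (x : ℝ) + 1
  | n + 1 => fun x =>
      if x < (a (n + 1) : NNReal) then etaAux a n x
      else etaAux a n (a (n + 1) : NNReal) + ((x : ℝ) - (a (n + 1) : ℝ)) / (n + 1)

/-- The slowly oscillating function `η_a` associated to a strictly increasing
sequence `a`, the pointwise limit (infimum) of the decreasing sequence `η_a^n`. -/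
noncomputable def eta (a : ℕ → ℕ) (x : NNReal) : ℝ := ⨅ n, etaAux a n x

lemma etaAux_slope (a : ℕ → ℕ) : ∀ n (x y : NNReal), y ≤ x →
    etaAux a n y + ((x : ℝ) - (y : ℝ)) / (n + 1) ≤ etaAux a n x := by
  intro n
  induction n with
  | zero =>
    intro x y hyx
    simp only [etaAux, Nat.cast_zero, zero_add, div_one]
    linarith
  | succ n ih =>
    intro x y hyx
    have hnn : (0:ℝ) < (n:ℝ) + 1 := by positivity
    have hyx' : (y:ℝ) ≤ (x:ℝ) := NNReal.coe_le_coe.mpr hyx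
    by_cases hx : x < ((a (n+1) : ℕ) : NNReal)
    · have hy : y < ((a (n+1) : ℕ) : NNReal) := lt_of_le_of_lt hyx hx
      simp only [etaAux, if_pos hx, if_pos hy]
      have h1 := ih x y hyx
      have hdiv : ((x:ℝ) - y) / ((n:ℝ) + 1 + 1) ≤ ((x:ℝ) - y) / ((n:ℝ) + 1) := by
        apply div_le_div_of_nonneg_left (by linarith) hnn (by linarith)
      push_cast
      push_cast at h1 hdiv
      linarith
    · have hAx' : ((a (n+1) : ℕ) : ℝ) ≤ (x:ℝ) := by
        exact_mod_cast NNReal.coe_le_coe.mpr (not_lt.mp hx)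
      by_cases hy : y < ((a (n+1) : ℕ) : NNReal)
      · have hyA' : (y:ℝ) ≤ ((a (n+1) : ℕ) : ℝ) := by
          exact_mod_cast (NNReal.coe_lt_coe.mpr hy).le
        simp only [etaAux, if_pos hy, if_neg hx]
        have h1 := ih ((a (n+1) : ℕ) : NNReal) y hy.le
        have hdiv : ((x:ℝ) - y) / ((n:ℝ) + 1 + 1) ≤ ((x:ℝ) - y) / ((n:ℝ) + 1) := by
          apply div_le_div_of_nonneg_left (by linarith) hnn (by linarith)
        have hsplit : ((x:ℝ) - y) / ((n:ℝ) + 1)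
            = (((a (n+1):ℕ):ℝ) - y) / ((n:ℝ) + 1)
              + ((x:ℝ) - ((a (n+1):ℕ):ℝ)) / ((n:ℝ) + 1) := by ring
        push_cast
        push_cast at h1 hdiv hsplit
        linarith
      · have hAy' : ((a (n+1):ℕ):ℝ) ≤ (y:ℝ) := by
          exact_mod_cast NNReal.coe_le_coe.mpr (not_lt.mp hy)
        simp only [etaAux, if_neg hx, if_neg hy]
        have hdiv : ((x:ℝ) - y) / ((n:ℝ) + 1 + 1) ≤ ((x:ℝ) - y) / ((n:ℝ) + 1) := by
          apply div_le_div_of_nonneg_left (by linarith) hnn (by linarith)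
        have hsplit : ((x:ℝ) - ((a (n+1):ℕ):ℝ)) / ((n:ℝ) + 1)
            = ((y:ℝ) - ((a (n+1):ℕ):ℝ)) / ((n:ℝ) + 1)
              + ((x:ℝ) - (y:ℝ)) / ((n:ℝ) + 1) := by ring
        push_cast
        push_cast at hdiv hsplit
        linarith

lemma etaAux_mono (a : ℕ → ℕ) (n : ℕ) {x y : NNReal} (h : y ≤ x) :
    etaAux a n y ≤ etaAux a n x := by
  have h1 := etaAux_slope a n x y h
  have hyx : (y:ℝ) ≤ (x:ℝ) := NNReal.coe_le_coe.mpr h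
  have h2 : (0:ℝ) ≤ ((x:ℝ) - y) / ((n:ℝ) + 1) := by
    apply div_nonneg (by linarith) (by positivity)
  push_cast at h1 h2
  linarith

lemma one_le_etaAux (a : ℕ → ℕ) : ∀ n (x : NNReal), 1 ≤ etaAux a n x := by
  intro n
  induction n with
  | zero =>
    intro x
    have := x.coe_nonneg
    simp only [etaAux]
    linarith
  | succ n ih =>
    intro x
    by_cases hx : x < ((a (n+1) : ℕ) : NNReal)
    · simp only [etaAux, if_pos hx]
      exact ih x
    · have hAx : ((a (n+1):ℕ):ℝ) ≤ (x:ℝ) := by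
        exact_mod_cast NNReal.coe_le_coe.mpr (not_lt.mp hx)
      have h2 : (0:ℝ) ≤ ((x:ℝ) - ((a (n+1):ℕ):ℝ)) / ((n:ℝ) + 1) := by
        apply div_nonneg (by linarith) (by positivity)
      have h3 := ih ((a (n+1):ℕ) : NNReal)
      simp only [etaAux, if_neg hx]
      push_cast
      push_cast at h2 h3
      linarith

lemma etaAux_succ_le (a : ℕ → ℕ) (n : ℕ) (x : NNReal) :
    etaAux a (n+1) x ≤ etaAux a n x := by
  by_cases hx : x < ((a (n+1):ℕ) : NNReal)
  · simp [etaAux, if_pos hx]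
  · have hAx : ((a (n+1):ℕ) : NNReal) ≤ x := not_lt.mp hx
    have h1 := etaAux_slope a n x ((a (n+1):ℕ) : NNReal) hAx
    simp only [etaAux, if_neg hx]
    push_cast
    push_cast at h1
    linarith

lemma etaAux_anti (a : ℕ → ℕ) (x : NNReal) : Antitone (fun n => etaAux a n x) :=
  antitone_nat_of_succ_le (fun n => etaAux_succ_le a n x)

lemma etaAux_le_linear (a : ℕ → ℕ) (n : ℕ) (x : NNReal) :
    etaAux a n x ≤ (x:ℝ) + 1 := by
  have := etaAux_anti a x (Nat.zero_le n)
  simpa [etaAux] using this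

lemma etaAux_eventually (a : ℕ → ℕ) (hm : Monotone a) {n : ℕ} {x : NNReal}
    (h : x < (a (n+1) : NNReal)) : ∀ m, n ≤ m → etaAux a m x = etaAux a n x := by
  intro m hnm
  induction m, hnm using Nat.le_induction with
  | base => rfl
  | succ m hnm ih =>
    have hcast : ((a (n+1) : ℕ) : NNReal) ≤ ((a (m+1) : ℕ) : NNReal) := by
      exact_mod_cast Nat.cast_le.mpr (hm (by omega))
    have hx : x < ((a (m+1):ℕ) : NNReal) := lt_of_lt_of_le h hcast
    simp [etaAux, if_pos hx, ih]

lemma bddBelow_etaAux (a : ℕ → ℕ) (x : NNReal) :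
    BddBelow (Set.range fun n => etaAux a n x) := by
  refine ⟨1, ?_⟩
  rintro y ⟨n, rfl⟩
  exact one_le_etaAux a n x

lemma eta_le_etaAux (a : ℕ → ℕ) (n : ℕ) (x : NNReal) : eta a x ≤ etaAux a n x :=
  ciInf_le (bddBelow_etaAux a x) n

lemma one_le_eta (a : ℕ → ℕ) (x : NNReal) : 1 ≤ eta a x :=
  le_ciInf (fun n => one_le_etaAux a n x)

lemma eta_eq (a : ℕ → ℕ) (hm : Monotone a) {n : ℕ} {x : NNReal}
    (h : x < (a (n+1) : NNReal)) : eta a x = etaAux a n x := by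
  refine le_antisymm (eta_le_etaAux a n x) (le_ciInf fun m => ?_)
  rcases le_total n m with hc | hc
  · exact (etaAux_eventually a hm h m hc).ge
  · exact etaAux_anti a x hc

lemma etaAux_le_of_le (a b : ℕ → ℕ) (hab : ∀ n, a n ≤ b n) :
    ∀ n (x : NNReal), etaAux a n x ≤ etaAux b n x := by
  intro n
  induction n with
  | zero => intro x; simp [etaAux]
  | succ n ih =>
    intro x
    have hAB : ((a (n+1) : ℕ) : NNReal) ≤ ((b (n+1) : ℕ) : NNReal) := by
      exact_mod_cast Nat.cast_le.mpr (hab (n+1))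
    by_cases hxB : x < ((b (n+1):ℕ) : NNReal)
    · calc etaAux a (n+1) x ≤ etaAux a n x := etaAux_succ_le a n x
        _ ≤ etaAux b n x := ih x
        _ = etaAux b (n+1) x := by simp [etaAux, if_pos hxB]
    · have hBx : ((b (n+1):ℕ) : NNReal) ≤ x := not_lt.mp hxB
      have hxA : ¬ x < ((a (n+1):ℕ) : NNReal) := not_lt.mpr (le_trans hAB hBx)
      have h1 := ih ((a (n+1):ℕ) : NNReal)
      have h2 := etaAux_slope b n ((b (n+1):ℕ) : NNReal) ((a (n+1):ℕ) : NNReal) hAB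
      have hab' : ((a (n+1):ℕ):ℝ) ≤ ((b (n+1):ℕ):ℝ) := by exact_mod_cast hab (n+1)
      have hBx' : ((b (n+1):ℕ):ℝ) ≤ (x:ℝ) := by exact_mod_cast NNReal.coe_le_coe.mpr hBx
      simp only [etaAux, if_neg hxA, if_neg hxB]
      have hsplit : ((x:ℝ) - ((a (n+1):ℕ):ℝ)) / ((n:ℝ)+1)
          = (((b (n+1):ℕ):ℝ) - ((a (n+1):ℕ):ℝ)) / ((n:ℝ)+1)
            + ((x:ℝ) - ((b (n+1):ℕ):ℝ)) / ((n:ℝ)+1) := by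
        ring
      push_cast
      push_cast at h1 h2 hsplit
      linarith

lemma eta_le_of_le (a b : ℕ → ℕ) (hab : ∀ n, a n ≤ b n) (x : NNReal) :
    eta a x ≤ eta b x :=
  ciInf_mono (bddBelow_etaAux a x) (fun n => etaAux_le_of_le a b hab n x)

lemma etaAux_upper (a : ℕ → ℕ) (l : ℕ) (x : NNReal) :
    etaAux a (l+1) x ≤ ((a (l+1):ℕ) : ℝ) + 1 + (x:ℝ) / ((l:ℝ)+1) := by
  have hnn : (0:ℝ) < (l:ℝ) + 1 := by positivity
  by_cases hx : x < ((a (l+1):ℕ) : NNReal)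
  · have h1 : etaAux a l x ≤ (x:ℝ) + 1 := etaAux_le_linear a l x
    have h2 : (x:ℝ) ≤ ((a (l+1):ℕ) : ℝ) := by
      exact_mod_cast (NNReal.coe_lt_coe.mpr hx).le
    have h3 : (0:ℝ) ≤ (x:ℝ) / ((l:ℝ)+1) := by positivity
    simp only [etaAux, if_pos hx]
    linarith
  · have hAx : ((a (l+1):ℕ):ℝ) ≤ (x:ℝ) := by
      exact_mod_cast NNReal.coe_le_coe.mpr (not_lt.mp hx)
    have hA0 : (0:ℝ) ≤ ((a (l+1):ℕ):ℝ) := by positivity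
    have h1 : etaAux a l ((a (l+1):ℕ) : NNReal) ≤ ((a (l+1):ℕ) : ℝ) + 1 := by
      have := etaAux_le_linear a l ((a (l+1):ℕ) : NNReal)
      push_cast at this ⊢
      linarith
    have h2 : ((x:ℝ) - ((a (l+1):ℕ):ℝ)) / ((l:ℝ)+1) ≤ (x:ℝ) / ((l:ℝ)+1) := by
      gcongr
      linarith
    simp only [etaAux, if_neg hx]
    push_cast
    push_cast at h1 h2
    linarith

lemma etaAux_upper' (a : ℕ → ℕ) (j : ℕ) (hj : 1 ≤ j) (x : NNReal) :
    etaAux a j x ≤ ((a j : ℕ) : ℝ) + 1 + (x:ℝ) / (j:ℝ) := by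
  obtain ⟨l, rfl⟩ : ∃ l, j = l + 1 := ⟨j - 1, by omega⟩
  have := etaAux_upper a l x
  push_cast at this ⊢
  linarith

noncomputable def bseq (a : ℕ → ℕ) : ℕ → ℕ
  | 0 => a 0
  | m + 1 => 2 * bseq a m + a (m+1) + 4*(m+2)*(m+1)*(a (4*(m+1)*(m+2)) + 1)

lemma bseq_strictMono (a : ℕ → ℕ) (ha : StrictMono a) : StrictMono (bseq a) := by
  apply strictMono_nat_of_lt_succ
  intro m
  have h1 : 1 ≤ a (m+1) := le_trans (by omega) ha.le_apply
  show bseq a m < 2 * bseq a m + a (m+1) + 4*(m+2)*(m+1)*(a (4*(m+1)*(m+2)) + 1)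
  nlinarith [Nat.zero_le (bseq a m), Nat.zero_le (4*(m+2)*(m+1)*(a (4*(m+1)*(m+2)) + 1))]

lemma le_bseq (a : ℕ → ℕ) : ∀ n, a n ≤ bseq a n := by
  intro n
  cases n with
  | zero => exact le_refl _
  | succ m =>
    show a (m+1) ≤ 2 * bseq a m + a (m+1) + 4*(m+2)*(m+1)*(a (4*(m+1)*(m+2)) + 1)
    omega

lemma bseq_key (a : ℕ → ℕ) (ha : StrictMono a) (K m n : ℕ) (hKm : K ≤ m) (hm1 : 1 ≤ m)
    (h1 : bseq a m ≤ n) (h2 : n < bseq a (m+1)) :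
    (K:ℝ) * eta a (n : NNReal) ≤ eta (bseq a) (n : NNReal) := by
  obtain ⟨p, rfl⟩ : ∃ p, m = p + 1 := ⟨m - 1, by omega⟩
  set j : ℕ := 4*(p+1)*(p+2) with hj
  have hd : bseq a (p+1+1) = 2 * bseq a (p+1) + a (p+2)
      + 4*(p+3)*(p+2)*(a (4*(p+2)*(p+3)) + 1) := rfl
  have hd' : bseq a (p+1) = 2 * bseq a p + a (p+1) + 4*(p+2)*(p+1)*(a j + 1) := rfl
  -- natural number facts
  have f1 : 2 * bseq a p ≤ n := by omega
  have f2 : 4*(p+2)*(p+1)*(a j + 1) ≤ n := by omega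
  -- eta b at n
  have hbmono : Monotone (bseq a) := (bseq_strictMono a ha).monotone
  have hxlt : ((n:ℕ) : NNReal) < ((bseq a (p+1+1) : ℕ) : NNReal) := Nat.cast_lt.mpr h2
  have heb : eta (bseq a) (n : NNReal) = etaAux (bseq a) (p+1) (n : NNReal) :=
    eta_eq (bseq a) hbmono hxlt
  have hle : ((bseq a p : ℕ) : NNReal) ≤ ((n:ℕ) : NNReal) := Nat.cast_le.mpr (by omega)
  have hs := etaAux_slope (bseq a) (p+1) ((n:ℕ) : NNReal) ((bseq a p : ℕ) : NNReal) hle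
  have hone := one_le_etaAux (bseq a) (p+1) ((bseq a p : ℕ) : NNReal)
  -- upper bound for eta a
  have hj1 : 1 ≤ j := by rw [hj]; exact Nat.succ_le_of_lt (by positivity)
  have hup := etaAux_upper' a j hj1 ((n:ℕ) : NNReal)
  have hEa : eta a ((n:ℕ) : NNReal) ≤ etaAux a j ((n:ℕ) : NNReal) := eta_le_etaAux a j _
  have hEa1 : (1:ℝ) ≤ eta a ((n:ℕ) : NNReal) := one_le_eta a _
  -- real arithmetic
  have hjR : (j:ℝ) = 4*((p:ℝ)+1)*((p:ℝ)+2) := by rw [hj]; push_cast; ring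
  have hp0 : (0:ℝ) < (p:ℝ) + 1 := by positivity
  have hf1R : 2 * ((bseq a p : ℕ) : ℝ) ≤ (n:ℝ) := by exact_mod_cast f1
  have hf2R : 4*((p:ℝ)+2)*((p:ℝ)+1)*(((a j : ℕ):ℝ) + 1) ≤ (n:ℝ) := by exact_mod_cast f2
  set Ea : ℝ := eta a ((n:ℕ) : NNReal)
  set Eb : ℝ := eta (bseq a) ((n:ℕ) : NNReal)
  have hKp : (K:ℝ) ≤ (p:ℝ) + 1 := by exact_mod_cast hKm
  have hEa0 : (0:ℝ) ≤ Ea := by linarith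
  have hA : (K:ℝ) * Ea ≤ ((p:ℝ)+1) * (((a j:ℕ):ℝ) + 1 + (n:ℝ)/(j:ℝ)) := by
    have : Ea ≤ ((a j:ℕ):ℝ) + 1 + (n:ℝ)/(j:ℝ) := le_trans hEa hup
    nlinarith
  have hB : ((p:ℝ)+1) * ((n:ℝ)/(j:ℝ)) = (n:ℝ)/(4*((p:ℝ)+2)) := by
    rw [hjR]; field_simp
  have hC : ((p:ℝ)+1) * (((a j:ℕ):ℝ) + 1) ≤ (n:ℝ)/(4*((p:ℝ)+2)) := by
    rw [le_div_iff₀ (by positivity)]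
    nlinarith
  -- lower bound for Eb
  have hslope : etaAux (bseq a) (p+1) ((bseq a p : ℕ) : NNReal)
      + (((n:ℕ):ℝ) - ((bseq a p:ℕ):ℝ)) / (((p:ℝ)+1) + 1) ≤ Eb := by
    rw [heb] at *
    push_cast at hs ⊢
    linarith
  have hD : (n:ℝ)/2 ≤ (n:ℝ) - ((bseq a p:ℕ):ℝ) := by linarith
  have hE : ((n:ℝ)/2) / (((p:ℝ)+1)+1) ≤ (((n:ℕ):ℝ) - ((bseq a p:ℕ):ℝ)) / (((p:ℝ)+1) + 1) := by
    push_cast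
    gcongr
    all_goals linarith
  have hF : ((n:ℝ)/2) / (((p:ℝ)+1)+1) = (n:ℝ)/(4*((p:ℝ)+2)) + (n:ℝ)/(4*((p:ℝ)+2)) := by
    field_simp
    ring
  linarith

theorem stmt_10 (a : ℕ → ℕ) (ha : StrictMono a) :
    ∃ b : ℕ → ℕ, StrictMono b ∧ (∀ x, eta a x ≤ eta b x) ∧
      Filter.Tendsto (fun n : ℕ => eta b n / eta a n) Filter.atTop Filter.atTop := by
  refine ⟨bseq a, bseq_strictMono a ha, fun x => eta_le_of_le a _ (le_bseq a) x, ?_⟩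
  rw [Filter.tendsto_atTop]
  intro C
  set K : ℕ := ⌈C⌉₊ + 1 with hK
  filter_upwards [Filter.eventually_ge_atTop (bseq a (K+1))] with n hn
  have hKn : K + 1 ≤ n := le_trans (bseq_strictMono a ha).le_apply hn
  set m : ℕ := Nat.findGreatest (fun k => bseq a k ≤ n) n with hm
  have hPm : bseq a m ≤ n := Nat.findGreatest_spec (P := fun k => bseq a k ≤ n) hKn hn
  have hmK : K + 1 ≤ m := Nat.le_findGreatest (P := fun k => bseq a k ≤ n) hKn hn
  have hn2 : n < bseq a (m+1) := by
    by_contra h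
    push_neg at h
    have h3 : m + 1 ≤ n := le_trans (bseq_strictMono a ha).le_apply h
    exact (Nat.findGreatest_is_greatest (P := fun k => bseq a k ≤ n) (Nat.lt_succ_self m) h3) h
  have hkey := bseq_key a ha K m n (by omega) (by omega) hPm hn2
  have hEa1 : (1:ℝ) ≤ eta a ((n:ℕ) : NNReal) := one_le_eta a _
  have hKC : C ≤ (K:ℝ) := by
    have := Nat.le_ceil C
    have h2 : ((⌈C⌉₊ : ℕ) : ℝ) ≤ (K:ℝ) := by exact_mod_cast Nat.le_succ ⌈C⌉₊
    linarith
  have : (K:ℝ) ≤ eta (bseq a) ((n:ℕ):NNReal) / eta a ((n:ℕ):NNReal) := by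
    rw [le_div_iff₀ (by linarith)]
    exact hkey
  exact le_trans hKC this
end
end
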